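/- arXiv:1208.2385 — 6 statements merged into one kernel-verified Lean document; each statement's English description precedes it below -/
import Mathlib

section
/- Let f, g ∈ ℂ[z] be polynomials, not both zero, and let n = max(deg f, deg g). Then the dimension of the kernel of the n×n Bezoutian matrix B = H_f·T_g − H_g·T_f (as a linear map ℂⁿ → ℂⁿ) equals the degree of gcd(f, g). -/
open Polynomial Matrix

/-- The `n × n` Hankel matrix of a polynomial `f`: `(H_f)_{jk} = f_{j+k+1}`. -/
noncomputable def Hk (n : ℕ) (f : ℂ[X]) : Matrix (Fin n) (Fin n) ℂ :=
  Matrix.of fun j k => f.coeff ((j : ℕ) + (k : ℕ) + 1)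

/-- The `n × n` upper triangular Toeplitz matrix of a polynomial `f`:
`(T_f)_{jk} = f_{k-j}` if `k ≥ j`, and `0` otherwise. -/
noncomputable def Tp (n : ℕ) (f : ℂ[X]) : Matrix (Fin n) (Fin n) ℂ :=
  Matrix.of fun j k => if (j : ℕ) ≤ (k : ℕ) then f.coeff ((k : ℕ) - (j : ℕ)) else 0

/-- The `n × n` reverse identity matrix `Z`. -/
noncomputable def Rv (n : ℕ) : Matrix (Fin n) (Fin n) ℂ :=
  Matrix.of fun j k => if (j : ℕ) + (k : ℕ) = n - 1 then 1 else 0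

/-- The `n × n` Bezoutian matrix of `f` and `g`: `B = H_f T_g - H_g T_f`. -/
noncomputable def Bz (n : ℕ) (f g : ℂ[X]) : Matrix (Fin n) (Fin n) ℂ :=
  Hk n f * Tp n g - Hk n g * Tp n f

/-- The `2n × 2n` resultant matrix of `f` and `g`:
`R = [[T_f, Z H_f], [T_g, Z H_g]]`. -/
noncomputable def Rs (n : ℕ) (f g : ℂ[X]) : Matrix (Fin n ⊕ Fin n) (Fin n ⊕ Fin n) ℂ :=
  Matrix.fromBlocks (Tp n f) (Rv n * Hk n f) (Tp n g) (Rv n * Hk n g)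

/-! Write `v` for the polynomial whose coefficient vector, highest degree first, is `u`, and
`Rₚ = p v mod Xⁿ`. The Bezoutian sends `u` to the coefficients in degrees `n, …, 2n-1` of
`f R_g - g R_f`; this polynomial is divisible by `Xⁿ` and has degree `< 2n`, so `u` is in the kernel
iff `f R_g = g R_f`. With `d = gcd(f, g)`, `f = d f₁`, `g = d g₁` and `k = deg d`, Bézout for the
coprime `f₁, g₁` turns this into `d v ≡ s (mod Xⁿ)` for some `s` of degree `< k`, i.e. the
coefficients of `d v` in degrees `k, …, n-1` vanish. These `n - k` linear conditions are
independent, since on polynomials of degree `< n - k` they see the leading coefficient of `d v`;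
hence the kernel has dimension `k`. -/

theorem EuclideanDomain.isCoprime_of_eq_gcd_mul {R : Type*} [EuclideanDomain R] [DecidableEq R]
    {f g f₁ g₁ : R} (hd : gcd f g ≠ 0) (hf : f = gcd f g * f₁) (hg : g = gcd f g * g₁) :
    IsCoprime f₁ g₁ := by
  refine ⟨gcdA f g, gcdB f g, mul_left_cancel₀ hd ?_⟩
  linear_combination -gcdA f g * hf - gcdB f g * hg - gcd_eq_gcd_ab f g

namespace Polynomial

variable {R : Type*}

section Semiring
variable [Semiring R]

-- `u` is read as `∑ uᵢ X^(n-1-i)`, leading coefficient first: in this order `Tp n q` acts as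
-- multiplication by `q`.
variable (R) in
noncomputable def revPoly (n : ℕ) : (Fin n → R) →ₗ[R] R[X] :=
  ∑ i : Fin n, (monomial (n - 1 - i)).comp (LinearMap.proj i)

theorem coeff_revPoly {n : ℕ} (u : Fin n → R) (m : ℕ) :
    (revPoly R n u).coeff m = if h : m < n then u ⟨n - 1 - m, by omega⟩ else 0 := by
  simp only [revPoly, LinearMap.coe_sum, Finset.sum_apply, LinearMap.comp_apply,
    LinearMap.proj_apply, finsetSum_coeff, coeff_monomial]
  split_ifs with h
  · rw [Finset.sum_eq_single ⟨n - 1 - m, by omega⟩ (fun i _ hi => if_neg fun h' => hi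
      (Fin.ext (by simp only; omega))) (by simp)]
    simp only [if_pos (show n - 1 - (n - 1 - m) = m by omega)]
  · exact Finset.sum_eq_zero fun i _ => if_neg (by omega)

theorem revPoly_coeff_rev {n : ℕ} {p : R[X]} (hp : p.degree < n) :
    revPoly R n (fun i => p.coeff (n - 1 - i)) = p := by
  ext m
  rw [coeff_revPoly]
  split_ifs with h
  · congr 1; simp only; omega
  · exact (coeff_eq_zero_of_degree_lt (hp.trans_le (by exact_mod_cast not_lt.1 h))).symm

theorem degree_mul_lt_of_natDegree_add_le {p s : R[X]} {k n : ℕ} (hp : p.natDegree + k ≤ n)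
    (hs : s.degree < k) : (p * s).degree < n := by
  rcases eq_or_ne s 0 with rfl | hs0
  · simp
  · have := (natDegree_lt_iff_degree_lt hs0).2 hs
    exact degree_le_natDegree.trans_lt (by exact_mod_cast (natDegree_mul_le).trans_lt (by omega))

theorem eq_zero_iff_coeff_add_eq_zero_of_X_pow_dvd {E : R[X]} {n : ℕ} (hdvd : X ^ n ∣ E)
    (hdeg : E.degree < ↑(n + n)) : E = 0 ↔ ∀ j < n, E.coeff (n + j) = 0 := by
  refine ⟨fun h j _ => by simp [h], fun h => ext fun d => ?_⟩
  rw [coeff_zero]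
  rcases lt_or_ge d n with hd | hd
  · exact X_pow_dvd_iff.1 hdvd d hd
  rcases lt_or_ge d (n + n) with hd' | hd'
  · simpa [Nat.add_sub_cancel' hd] using h (d - n) (by omega)
  · exact coeff_eq_zero_of_degree_lt (hdeg.trans_le (by exact_mod_cast hd'))

end Semiring

section Ring
variable [Ring R] [Nontrivial R]

theorem coeff_modByMonic_X_pow (p : R[X]) (n m : ℕ) :
    (p %ₘ X ^ n).coeff m = if m < n then p.coeff m else 0 := by
  split_ifs with h
  · conv_rhs => rw [← modByMonic_add_div p (X ^ n)]
    rw [coeff_add, coeff_X_pow_mul', if_neg (by omega), add_zero]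
  · refine coeff_eq_zero_of_degree_lt ((degree_modByMonic_lt _ (monic_X_pow n)).trans_le ?_)
    rw [degree_X_pow]; exact_mod_cast not_lt.1 h

end Ring

section CommRing
variable [CommRing R] [Nontrivial R]

theorem modByMonic_eq_of_dvd_sub_of_degree_lt {p q r : R[X]} (hq : q.Monic) (h : q ∣ p - r)
    (hr : r.degree < q.degree) : p %ₘ q = r :=
  (modByMonic_eq_of_dvd_sub hq h).trans ((modByMonic_eq_self_iff hq).2 hr)

theorem exists_degree_lt_X_pow_dvd_sub_iff {p : R[X]} {k m : ℕ} :
    (∃ s : R[X], s.degree < k ∧ X ^ (k + m) ∣ p - s) ↔ ∀ i < m, p.coeff (k + i) = 0 := by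
  constructor
  · rintro ⟨s, hs, hdvd⟩ i hi
    have := X_pow_dvd_iff.1 hdvd (k + i) (by omega)
    rwa [coeff_sub, coeff_eq_zero_of_degree_lt (hs.trans_le (by exact_mod_cast le_self_add)),
      sub_zero] at this
  · intro h
    refine ⟨p %ₘ X ^ (k + m), (degree_lt_iff_coeff_zero _ _).2 fun d hd => ?_,
      dvd_sub_comm.1 (dvd_modByMonic_sub _ _)⟩
    rw [coeff_modByMonic_X_pow]
    split_ifs with hdm
    · simpa [Nat.add_sub_cancel' (show k ≤ d by exact_mod_cast hd)] using h (d - k) (by omega)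
    · rfl

end CommRing

section Domain
variable [CommRing R] [IsDomain R]

theorem max_natDegree_mul_left {D p q : R[X]} (hD : D ≠ 0) (hpq : p ≠ 0 ∨ q ≠ 0) :
    max (D * p).natDegree (D * q).natDegree = D.natDegree + max p.natDegree q.natDegree := by
  rcases eq_or_ne p 0 with rfl | hp <;> rcases eq_or_ne q 0 with rfl | hq
  · tauto
  · simp [natDegree_mul hD hq]
  · simp [natDegree_mul hD hp]
  · rw [natDegree_mul hD hp, natDegree_mul hD hq]; omega

theorem degree_lt_of_degree_mul_lt_max {p q s : R[X]} {k : ℕ} (hpq : p ≠ 0 ∨ q ≠ 0)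
    (hp : (p * s).degree < ↑(max p.natDegree q.natDegree + k))
    (hq : (q * s).degree < ↑(max p.natDegree q.natDegree + k)) : s.degree < k := by
  rcases eq_or_ne s 0 with rfl | hs
  · simp
  have bound : ∀ r : R[X], r ≠ 0 → (r * s).degree < ↑(max p.natDegree q.natDegree + k) →
      r.natDegree + s.natDegree < max p.natDegree q.natDegree + k := fun r hr h => by
    rwa [← natDegree_mul hr hs, natDegree_lt_iff_degree_lt (mul_ne_zero hr hs)]
  rw [← natDegree_lt_iff_degree_lt hs]
  rcases eq_or_ne p 0 with rfl | hp0 <;> rcases eq_or_ne q 0 with rfl | hq0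
  · tauto
  · have := bound q hq0 hq; simp only [natDegree_zero] at this ⊢; omega
  · have := bound p hp0 hp; simp only [natDegree_zero] at this ⊢; omega
  · have := bound p hp0 hp; have := bound q hq0 hq; omega

theorem mul_modByMonic_X_pow_comm_iff {D f₁ g₁ v : R[X]} {k n : ℕ} (hD : D ≠ 0)
    (hcop : IsCoprime f₁ g₁) (hn : max f₁.natDegree g₁.natDegree + k = n) :
    D * f₁ * ((D * g₁ * v) %ₘ X ^ n) = D * g₁ * ((D * f₁ * v) %ₘ X ^ n) ↔
      ∃ s : R[X], s.degree < k ∧ X ^ n ∣ D * v - s := by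
  have hmon : (X ^ n : R[X]).Monic := monic_X_pow n
  have hpq : f₁ ≠ 0 ∨ g₁ ≠ 0 := hcop.ne_zero_or_ne_zero
  obtain ⟨a, b, hab⟩ := hcop
  constructor
  · intro h
    set Rf := (D * f₁ * v) %ₘ X ^ n
    set Rg := (D * g₁ * v) %ₘ X ^ n
    have hcross : f₁ * Rg = g₁ * Rf := mul_left_cancel₀ hD (by rw [← mul_assoc, h, mul_assoc])
    -- the Bézout combination of the two remainders recovers both of them
    set s := a * Rf + b * Rg
    have hfs : f₁ * s = Rf := by linear_combination b * hcross + Rf * hab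
    have hgs : g₁ * s = Rg := by linear_combination (-a) * hcross + Rg * hab
    have hdeg : ∀ p : R[X], ((p * v) %ₘ X ^ n).degree < ↑(max f₁.natDegree g₁.natDegree + k) :=
      fun p => by rw [hn, ← degree_X_pow (R := R)]; exact degree_modByMonic_lt _ hmon
    have hdvd : ∀ p : R[X], (D * p * v) %ₘ X ^ n = p * s → X ^ n ∣ p * (D * v - s) := fun p hp => by
      rw [show p * (D * v - s) = -((D * p * v) %ₘ X ^ n - D * p * v) by rw [hp]; ring, dvd_neg]
      exact dvd_modByMonic_sub _ _
    refine ⟨s, degree_lt_of_degree_mul_lt_max hpq (hfs ▸ hdeg _) (hgs ▸ hdeg _), ?_⟩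
    rw [show D * v - s = a * (f₁ * (D * v - s)) + b * (g₁ * (D * v - s)) by
      linear_combination (s - D * v) * hab]
    exact dvd_add ((hdvd f₁ hfs.symm).mul_left a) ((hdvd g₁ hgs.symm).mul_left b)
  · rintro ⟨s, hs, hdvd⟩
    have hrem : ∀ p : R[X], p.natDegree + k ≤ n → (D * p * v) %ₘ X ^ n = p * s := fun p hp =>
      modByMonic_eq_of_dvd_sub_of_degree_lt hmon
        (by rw [show D * p * v - p * s = p * (D * v - s) by ring]; exact hdvd.mul_left p)
        (by rw [degree_X_pow]; exact degree_mul_lt_of_natDegree_add_le hp hs)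
    rw [hrem f₁ (by omega), hrem g₁ (by omega)]
    ring

end Domain

section Field
variable {K : Type*} [Field K]

noncomputable def mulCoeffWindow (D : K[X]) (k m : ℕ) : K[X] →ₗ[K] Fin m → K :=
  LinearMap.pi fun i => (lcoeff K (k + i)).comp (LinearMap.mulLeft K D)

@[simp]
theorem mulCoeffWindow_apply (D p : K[X]) (k m : ℕ) (i : Fin m) :
    mulCoeffWindow D k m p i = (D * p).coeff (k + i) := rfl

theorem mulCoeffWindow_comp_degreeLT_injective {D : K[X]} (hD : D ≠ 0) (m : ℕ) :
    Function.Injective ((mulCoeffWindow D D.natDegree m).comp (degreeLT K m).subtype) := by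
  rw [← LinearMap.ker_eq_bot, Submodule.eq_bot_iff]
  rintro ⟨p, hp⟩ hker
  by_contra hp0
  replace hp0 : p ≠ 0 := fun h => hp0 (Subtype.ext h)
  have hpm : p.natDegree < m := (natDegree_lt_iff_degree_lt hp0).2 (mem_degreeLT.1 hp)
  -- the window sees the leading coefficient of `D * p`
  have := congrFun (LinearMap.mem_ker.1 hker) ⟨p.natDegree, hpm⟩
  simp only [LinearMap.comp_apply, Submodule.subtype_apply, mulCoeffWindow_apply,
    Pi.zero_apply] at this
  rw [← natDegree_mul hD hp0, coeff_natDegree, leadingCoeff_eq_zero] at this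
  exact mul_ne_zero hD hp0 this

theorem finrank_ker_mulCoeffWindow_comp_revPoly {D : K[X]} (hD : D ≠ 0) (m : ℕ) :
    Module.finrank K (LinearMap.ker
      ((mulCoeffWindow D D.natDegree m).comp (revPoly K (D.natDegree + m)))) = D.natDegree := by
  set k := D.natDegree
  have hsurj : Function.Surjective ((mulCoeffWindow D k m).comp (revPoly K (k + m))) := by
    intro c
    obtain ⟨⟨p, hp⟩, rfl⟩ := (LinearMap.injective_iff_surjective_of_finrank_eq_finrank
      (degreeLTEquiv K m).finrank_eq).1
      (mulCoeffWindow_comp_degreeLT_injective hD m) c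
    refine ⟨fun i => p.coeff (k + m - 1 - i), ?_⟩
    rw [LinearMap.comp_apply, revPoly_coeff_rev ((mem_degreeLT.1 hp).trans_le
      (by exact_mod_cast Nat.le_add_left m k))]
    rfl
  have := LinearMap.finrank_range_add_finrank_ker ((mulCoeffWindow D k m).comp (revPoly K (k + m)))
  rw [LinearMap.range_eq_top.2 hsurj, finrank_top, Module.finrank_fin_fun,
    Module.finrank_fin_fun] at this
  omega

end Field

end Polynomial

theorem Tp_mulVec {n : ℕ} (q : ℂ[X]) (u : Fin n → ℂ) :
    Tp n q *ᵥ u = fun l : Fin n => (q * revPoly ℂ n u).coeff (n - 1 - l) := by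
  ext l
  simp only [mulVec, dotProduct, revPoly, LinearMap.coe_sum, Finset.sum_apply,
    LinearMap.comp_apply, LinearMap.proj_apply, Finset.mul_sum, finsetSum_coeff]
  refine Finset.sum_congr rfl fun k _ => ?_
  rw [← C_mul_X_pow_eq_monomial, ← mul_assoc, coeff_mul_X_pow', coeff_mul_C, Tp, of_apply]
  have := k.isLt
  by_cases h : (l : ℕ) ≤ k
  · rw [if_pos h, if_pos (by omega), show n - 1 - l - (n - 1 - k) = k - l by omega]
  · rw [if_neg h, if_neg (by omega), zero_mul]

theorem Hk_mulVec {n : ℕ} (p r : ℂ[X]) (hr : r.degree < n) :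
    Hk n p *ᵥ (fun l : Fin n => r.coeff (n - 1 - l)) = fun j : Fin n => (p * r).coeff (n + j) := by
  ext j
  simp only [mulVec, dotProduct, Hk, of_apply]
  have hvanish : ∀ a ∈ Finset.range (n + j + 1), a ∉ Finset.range n →
      r.coeff a * p.coeff (n + j - a) = 0 := fun a _ ha => by
    rw [coeff_eq_zero_of_degree_lt (hr.trans_le (by exact_mod_cast (by simpa using ha))), zero_mul]
  rw [mul_comm, coeff_mul, Finset.Nat.sum_antidiagonal_eq_sum_range_succ
      (fun a b => r.coeff a * p.coeff b),
    ← Finset.sum_subset (Finset.range_subset_range.2 (by omega : n ≤ n + j + 1)) hvanish,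
    ← Finset.sum_range_reflect (fun a => r.coeff a * p.coeff (n + j - a)),
    ← Fin.sum_univ_eq_sum_range (fun a => r.coeff (n - 1 - a) * p.coeff (n + j - (n - 1 - a)))]
  refine Finset.sum_congr rfl fun l _ => ?_
  rw [mul_comm, show n + j - (n - 1 - l) = j + l + 1 by omega]

theorem Bz_mulVec {n : ℕ} (f g : ℂ[X]) (u : Fin n → ℂ) :
    Bz n f g *ᵥ u = fun j : Fin n => (f * ((g * revPoly ℂ n u) %ₘ X ^ n) -
      g * ((f * revPoly ℂ n u) %ₘ X ^ n)).coeff (n + j) := by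
  have hTp : ∀ q : ℂ[X], Tp n q *ᵥ u =
      fun l : Fin n => ((q * revPoly ℂ n u) %ₘ X ^ n).coeff (n - 1 - l) := fun q => by
    ext l
    rw [Tp_mulVec, coeff_modByMonic_X_pow, if_pos (by omega)]
  have hdeg : ∀ q : ℂ[X], ((q * revPoly ℂ n u) %ₘ X ^ n).degree < n := fun q => by
    simpa using degree_modByMonic_lt (q * revPoly ℂ n u) (monic_X_pow n)
  ext j
  rw [Bz, sub_mulVec, ← mulVec_mulVec, ← mulVec_mulVec, hTp, hTp, Hk_mulVec _ _ (hdeg g),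
    Hk_mulVec _ _ (hdeg f), Pi.sub_apply, coeff_sub]

theorem Bz_mulVec_eq_zero_iff {n : ℕ} {f g : ℂ[X]} (hf : f.natDegree ≤ n) (hg : g.natDegree ≤ n)
    (u : Fin n → ℂ) :
    Bz n f g *ᵥ u = 0 ↔
      f * ((g * revPoly ℂ n u) %ₘ X ^ n) = g * ((f * revPoly ℂ n u) %ₘ X ^ n) := by
  set v := revPoly ℂ n u
  have hdvd : X ^ n ∣ f * ((g * v) %ₘ X ^ n) - g * ((f * v) %ₘ X ^ n) := by
    have := dvd_sub ((dvd_modByMonic_sub (g * v) (X ^ n)).mul_left f)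
      ((dvd_modByMonic_sub (f * v) (X ^ n)).mul_left g)
    rwa [show f * ((g * v) %ₘ X ^ n - g * v) - g * ((f * v) %ₘ X ^ n - f * v) =
      f * ((g * v) %ₘ X ^ n) - g * ((f * v) %ₘ X ^ n) by ring] at this
  have hdeg : ∀ p q : ℂ[X], p.natDegree ≤ n → (p * ((q * v) %ₘ X ^ n)).degree < ↑(n + n) :=
    fun p q hp => degree_mul_lt_of_natDegree_add_le (k := n) (by omega)
      (by simpa using degree_modByMonic_lt (q * v) (monic_X_pow n))
  rw [← sub_eq_zero (a := f * _), eq_zero_iff_coeff_add_eq_zero_of_X_pow_dvd hdvd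
    ((degree_sub_le _ _).trans_lt (max_lt (hdeg f g hf) (hdeg g f hg))), Bz_mulVec, funext_iff,
    Fin.forall_iff]
  rfl

/-- The nullity of the Bezoutian matrix of `f` and `g` (of size `n = max(deg f, deg g)`)
equals the degree of `gcd(f, g)`. -/
theorem bezoutian_nullity (f g : ℂ[X]) (hfg : f ≠ 0 ∨ g ≠ 0)
    (n : ℕ) (hn : n = max f.natDegree g.natDegree) :
    Module.finrank ℂ (LinearMap.ker (Matrix.toLin' (Bz n f g))) =
      (EuclideanDomain.gcd f g).natDegree := by
  set D := EuclideanDomain.gcd f g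
  have hD : D ≠ 0 := fun h => by simp_all [D, EuclideanDomain.gcd_eq_zero_iff]
  obtain ⟨f₁, hf₁⟩ : D ∣ f := EuclideanDomain.gcd_dvd_left f g
  obtain ⟨g₁, hg₁⟩ : D ∣ g := EuclideanDomain.gcd_dvd_right f g
  have hcop : IsCoprime f₁ g₁ := EuclideanDomain.isCoprime_of_eq_gcd_mul hD hf₁ hg₁
  have hn₁ : max f₁.natDegree g₁.natDegree + D.natDegree = n := by
    rw [hn, hf₁, hg₁, max_natDegree_mul_left hD hcop.ne_zero_or_ne_zero, add_comm]
  obtain ⟨m, rfl⟩ : ∃ m, n = D.natDegree + m := ⟨max f₁.natDegree g₁.natDegree, by omega⟩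
  have hker : LinearMap.ker (toLin' (Bz (D.natDegree + m) f g)) =
      LinearMap.ker ((mulCoeffWindow D D.natDegree m).comp (revPoly ℂ (D.natDegree + m))) := by
    ext u
    rw [LinearMap.mem_ker, LinearMap.mem_ker, toLin'_apply,
      Bz_mulVec_eq_zero_iff (by omega) (by omega), hf₁, hg₁,
      mul_modByMonic_X_pow_comm_iff hD hcop hn₁, exists_degree_lt_X_pow_dvd_sub_iff, funext_iff,
      Fin.forall_iff]
    rfl
  rw [hker, finrank_ker_mulCoeffWindow_comp_revPoly hD]
end

section
/- Let f, g ∈ ℂ[z] be polynomials, not both zero, and let n = max(deg f, deg g). Then the dimension of the kernel of the n×n Bezoutian matrix B = H_f·T_g − H_g·T_f equals the dimension of the kernel of the 2n×2n resultant matrix R = [[T_f, Z·H_f],[T_g, Z·H_g]]. -/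
open Polynomial Matrix

open Module LinearMap


open Finset in
lemma sum_ite_interval {N a b : ℕ} (hb : b < N) (t : ℕ → ℂ) :
    (∑ m ∈ range N, if a ≤ m ∧ m ≤ b then t m else 0) = ∑ i ∈ range (b + 1 - a), t (a + i) := by
  rw [← Finset.sum_filter]
  have h : (range N).filter (fun m => a ≤ m ∧ m ≤ b) = Ico a (b+1) := by
    ext m; simp only [mem_filter, mem_range, mem_Ico]; omega
  rw [h, Finset.sum_Ico_eq_sum_range]

open Finset in
lemma sum_ite_le {N b : ℕ} (hb : b < N) (t : ℕ → ℂ) :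
    (∑ m ∈ range N, if m ≤ b then t m else 0) = ∑ i ∈ range (b + 1), t i := by
  have h := sum_ite_interval (a := 0) hb t
  simp only [Nat.zero_le, true_and, Nat.sub_zero, Nat.zero_add] at h
  simpa using h

lemma Tp_mul (n : ℕ) (f g : ℂ[X]) : Tp n f * Tp n g = Tp n (f * g) := by
  ext j k
  rw [Matrix.mul_apply]
  simp only [Tp, Matrix.of_apply]
  rw [Fin.sum_univ_eq_sum_range (fun m => (if (j:ℕ) ≤ m then f.coeff (m - (j:ℕ)) else 0) *
    (if m ≤ (k:ℕ) then g.coeff ((k:ℕ) - m) else 0)) n]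
  have hk := k.isLt
  have hsum : (∑ m ∈ Finset.range n, (if (j:ℕ) ≤ m then f.coeff (m-(j:ℕ)) else 0) *
      (if m ≤ (k:ℕ) then g.coeff ((k:ℕ)-m) else 0)) =
      ∑ m ∈ Finset.range n, (if (j:ℕ) ≤ m ∧ m ≤ (k:ℕ) then f.coeff (m-(j:ℕ)) * g.coeff ((k:ℕ)-m) else 0) :=
    Finset.sum_congr rfl fun m _ => by
      by_cases h1 : (j:ℕ) ≤ m <;> by_cases h2 : m ≤ (k:ℕ) <;> simp [h1, h2]
  rw [hsum, sum_ite_interval hk]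
  by_cases hjk : (j:ℕ) ≤ (k:ℕ)
  · rw [if_pos hjk, coeff_mul, Finset.Nat.sum_antidiagonal_eq_sum_range_succ_mk]
    have h2 : (k:ℕ)+1-(j:ℕ) = (k:ℕ)-(j:ℕ)+1 := by omega
    rw [h2]
    refine Finset.sum_congr rfl fun i hi => ?_
    rw [Finset.mem_range] at hi
    congr 1
    · congr 1; omega
    · congr 1; omega
  · rw [if_neg hjk]
    have h2 : (k:ℕ)+1-(j:ℕ) = 0 := by omega
    rw [h2]; simp

open Finset in
lemma Hk_mul (n : ℕ) (f g : ℂ[X]) :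
    Hk n (f * g) = Hk n f * Tp n g + (Tp n f)ᵀ * Hk n g := by
  ext j k
  rw [Matrix.add_apply, Matrix.mul_apply, Matrix.mul_apply]
  simp only [Hk, Tp, Matrix.of_apply, Matrix.transpose_apply]
  have hk := k.isLt
  have hj := j.isLt
  rw [Fin.sum_univ_eq_sum_range (fun m => f.coeff ((j:ℕ) + m + 1) *
    (if m ≤ (k:ℕ) then g.coeff ((k:ℕ) - m) else 0)) n]
  rw [Fin.sum_univ_eq_sum_range (fun m => (if m ≤ (j:ℕ) then f.coeff ((j:ℕ) - m) else 0) *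
    g.coeff (m + (k:ℕ) + 1)) n]
  have e1 : (∑ m ∈ range n, f.coeff ((j:ℕ) + m + 1) * (if m ≤ (k:ℕ) then g.coeff ((k:ℕ) - m) else 0))
      = ∑ m ∈ range n, (if m ≤ (k:ℕ) then f.coeff ((j:ℕ) + m + 1) * g.coeff ((k:ℕ) - m) else 0) :=
    Finset.sum_congr rfl fun m _ => by by_cases h : m ≤ (k:ℕ) <;> simp [h]
  have e2 : (∑ m ∈ range n, (if m ≤ (j:ℕ) then f.coeff ((j:ℕ) - m) else 0) * g.coeff (m + (k:ℕ) + 1))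
      = ∑ m ∈ range n, (if m ≤ (j:ℕ) then f.coeff ((j:ℕ) - m) * g.coeff (m + (k:ℕ) + 1) else 0) :=
    Finset.sum_congr rfl fun m _ => by by_cases h : m ≤ (j:ℕ) <;> simp [h]
  rw [e1, e2, sum_ite_le hk, sum_ite_le hj, coeff_mul,
    Finset.Nat.sum_antidiagonal_eq_sum_range_succ_mk]
  -- LHS : ∑ p ∈ range (j+k+2), f_p g_{j+k+1-p}
  -- RHS : ∑ m ∈ range (k+1), f_{j+m+1} g_{k-m}  +  ∑ m ∈ range (j+1), f_{j-m} g_{m+k+1}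
  have e3 : (∑ m ∈ range ((j:ℕ)+1), f.coeff ((j:ℕ) - m) * g.coeff (m + (k:ℕ) + 1))
      = ∑ m ∈ range ((j:ℕ)+1), f.coeff m * g.coeff ((j:ℕ)+(k:ℕ)+1 - m) := by
    rw [← Finset.sum_range_reflect]
    refine Finset.sum_congr rfl fun i hi => ?_
    rw [Finset.mem_range] at hi
    congr 1
    · congr 1; omega
    · congr 1; omega
  have e4 : (∑ m ∈ range ((k:ℕ)+1), f.coeff ((j:ℕ) + m + 1) * g.coeff ((k:ℕ) - m))
      = ∑ m ∈ Ico ((j:ℕ)+1) ((j:ℕ)+(k:ℕ)+2), f.coeff m * g.coeff ((j:ℕ)+(k:ℕ)+1 - m) := by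
    rw [Finset.sum_Ico_eq_sum_range]
    have h2 : (j:ℕ)+(k:ℕ)+2 - ((j:ℕ)+1) = (k:ℕ)+1 := by omega
    rw [h2]
    refine Finset.sum_congr rfl fun i hi => ?_
    rw [Finset.mem_range] at hi
    congr 1
    · congr 1; omega
    · congr 1; omega
  rw [e3, e4]
  rw [show (j:ℕ)+(k:ℕ)+1+1 = (j:ℕ)+(k:ℕ)+2 from rfl]
  rw [range_eq_Ico, ← Finset.sum_Ico_consecutive _ (Nat.zero_le ((j:ℕ)+1)) (by omega : (j:ℕ)+1 ≤ (j:ℕ)+(k:ℕ)+2)]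
  rw [← range_eq_Ico]
  ring

lemma mul_Rv_apply {n : ℕ} (A : Matrix (Fin n) (Fin n) ℂ) (j k : Fin n) :
    (A * Rv n) j k = A j k.rev := by
  rw [Matrix.mul_apply]
  rw [Finset.sum_eq_single k.rev]
  · simp only [Rv, Matrix.of_apply, Fin.val_rev]
    rw [if_pos (by have := k.isLt; omega), mul_one]
  · intro m _ hm
    simp only [Rv, Matrix.of_apply]
    rw [if_neg, mul_zero]
    have := k.isLt; have := m.isLt
    intro h
    exact hm (by ext; simp [Fin.val_rev]; omega)
  · intro h; exact absurd (Finset.mem_univ _) h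

lemma Rv_mul_apply {n : ℕ} (A : Matrix (Fin n) (Fin n) ℂ) (j k : Fin n) :
    (Rv n * A) j k = A j.rev k := by
  rw [Matrix.mul_apply]
  rw [Finset.sum_eq_single j.rev]
  · simp only [Rv, Matrix.of_apply, Fin.val_rev]
    rw [if_pos (by have := j.isLt; omega), one_mul]
  · intro m _ hm
    simp only [Rv, Matrix.of_apply]
    rw [if_neg, zero_mul]
    have := j.isLt; have := m.isLt
    intro h
    exact hm (by ext; simp [Fin.val_rev]; omega)
  · intro h; exact absurd (Finset.mem_univ _) h

lemma Rv_mul_Rv {n : ℕ} : Rv n * Rv n = (1 : Matrix (Fin n) (Fin n) ℂ) := by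
  ext j k
  rw [Rv_mul_apply]
  simp only [Rv, Matrix.of_apply, Fin.val_rev, Matrix.one_apply]
  have := j.isLt; have := k.isLt
  by_cases h : j = k
  · subst h; rw [if_pos (by omega), if_pos rfl]
  · rw [if_neg, if_neg h]
    intro hcon
    exact h (by ext; omega)

lemma Rv_Rv_mul {n : ℕ} (A : Matrix (Fin n) (Fin n) ℂ) : Rv n * (Rv n * A) = A := by
  rw [← mul_assoc, Rv_mul_Rv, one_mul]

lemma Tp_mul_Rv {n : ℕ} (f : ℂ[X]) : Tp n f * Rv n = Rv n * (Tp n f)ᵀ := by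
  ext j k
  rw [mul_Rv_apply, Rv_mul_apply]
  simp only [Tp, Matrix.of_apply, Matrix.transpose_apply, Fin.val_rev]
  have := j.isLt; have := k.isLt
  by_cases h : (j:ℕ) + (k:ℕ) ≤ n - 1
  · rw [if_pos (by omega), if_pos (by omega)]
    congr 1; omega
  · rw [if_neg (by omega), if_neg (by omega)]

lemma Bz_symm_form (n : ℕ) (f g : ℂ[X]) :
    (Tp n g)ᵀ * Hk n f - (Tp n f)ᵀ * Hk n g = Bz n f g := by
  have h3 : Hk n f * Tp n g + (Tp n f)ᵀ * Hk n g = Hk n g * Tp n f + (Tp n g)ᵀ * Hk n f := by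
    rw [← Hk_mul, ← Hk_mul, mul_comm]
  unfold Bz
  calc (Tp n g)ᵀ * Hk n f - (Tp n f)ᵀ * Hk n g
      = (Hk n g * Tp n f + (Tp n g)ᵀ * Hk n f) - (Hk n g * Tp n f + (Tp n f)ᵀ * Hk n g) := by abel
    _ = (Hk n f * Tp n g + (Tp n f)ᵀ * Hk n g) - (Hk n g * Tp n f + (Tp n f)ᵀ * Hk n g) := by rw [h3]
    _ = Hk n f * Tp n g - Hk n g * Tp n f := by abel

lemma key_identity (n : ℕ) (f g : ℂ[X]) :
    Tp n g * (Rv n * Hk n f) - Tp n f * (Rv n * Hk n g) = Rv n * Bz n f g := by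
  rw [← mul_assoc, ← mul_assoc, Tp_mul_Rv, Tp_mul_Rv, mul_assoc, mul_assoc, ← mul_sub,
    Bz_symm_form]

lemma det_Tp (n : ℕ) (f : ℂ[X]) : (Tp n f).det = (f.coeff 0) ^ n := by
  have h : (Tp n f).BlockTriangular _root_.id := by
    intro i j hij
    simp only [Tp, Matrix.of_apply]
    rw [if_neg]
    exact Nat.not_le.mpr hij
  rw [Matrix.det_of_upperTriangular h]
  simp only [Tp, Matrix.of_apply, le_refl, if_pos, Nat.sub_self]
  rw [Finset.prod_const, Finset.card_univ, Fintype.card_fin]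

lemma Tp_reflect {n : ℕ} {f : ℂ[X]} (hf : f.natDegree ≤ n) :
    Tp n (reflect n f) = Hk n f * Rv n := by
  ext j k
  rw [mul_Rv_apply]
  simp only [Tp, Hk, Matrix.of_apply, Fin.val_rev, coeff_reflect]
  have hj := j.isLt; have hk := k.isLt
  by_cases h : (j:ℕ) ≤ (k:ℕ)
  · rw [if_pos h, revAt_le (by omega : (k:ℕ) - (j:ℕ) ≤ n)]
    congr 1; omega
  · rw [if_neg h]
    refine (coeff_eq_zero_of_natDegree_lt ?_).symm
    omega

lemma Hk_reflect {n : ℕ} {f : ℂ[X]} (hf : f.natDegree ≤ n) :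
    Hk n (reflect n f) = Tp n f * Rv n := by
  ext j k
  rw [mul_Rv_apply]
  simp only [Tp, Hk, Matrix.of_apply, Fin.val_rev, coeff_reflect]
  have hj := j.isLt; have hk := k.isLt
  by_cases h : (j:ℕ) + (k:ℕ) + 1 ≤ n
  · rw [revAt_le h, if_pos (by omega)]
    congr 1; omega
  · rw [revAt_eq_self_of_lt (by omega), if_neg (by omega)]
    exact coeff_eq_zero_of_natDegree_lt (by omega)

variable {m : Type*} [Fintype m] [DecidableEq m]

lemma null_left (P A : Matrix m m ℂ) [Invertible P] :
    LinearMap.ker (Matrix.toLin' (P * A)) = LinearMap.ker (Matrix.toLin' A) := by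
  have hinj : Function.Injective (Matrix.toLin' P) := by
    have h : (Matrix.toLin' (⅟P)).comp (Matrix.toLin' P) = LinearMap.id := by
      rw [← Matrix.toLin'_mul, invOf_mul_self, Matrix.toLin'_one]
    intro x y hxy
    have := congrArg (Matrix.toLin' (⅟P)) hxy
    simpa [← LinearMap.comp_apply, h] using this
  rw [Matrix.toLin'_mul, LinearMap.ker_comp, LinearMap.ker_eq_bot.mpr hinj, Submodule.comap_bot]

lemma null_right (A U : Matrix m m ℂ) [Invertible U] :
    finrank ℂ (LinearMap.ker (Matrix.toLin' (A * U))) =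
      finrank ℂ (LinearMap.ker (Matrix.toLin' A)) := by
  let e : (m → ℂ) ≃ₗ[ℂ] (m → ℂ) := Matrix.toLin'OfInv (invOf_mul_self U) (mul_invOf_self U)
  have he : (e : (m → ℂ) →ₗ[ℂ] (m → ℂ)) = Matrix.toLin' U := by
    apply LinearMap.ext; intro x; rfl
  have h : LinearMap.ker (Matrix.toLin' (A * U)) =
      Submodule.comap (e : (m → ℂ) →ₗ[ℂ] (m → ℂ)) (LinearMap.ker (Matrix.toLin' A)) := by
    rw [Matrix.toLin'_mul, LinearMap.ker_comp, he]
  rw [h]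
  exact LinearEquiv.finrank_eq (LinearEquiv.ofSubmodule' e _)

noncomputable def elimZero (n : ℕ) : (Fin n → ℂ) →ₗ[ℂ] ((Fin n ⊕ Fin n) → ℂ) where
  toFun v := Sum.elim 0 v
  map_add' a b := by funext i; cases i <;> simp
  map_smul' c a := by funext i; cases i <;> simp

lemma null_blockdiag {n : ℕ} (S : Matrix (Fin n) (Fin n) ℂ) :
    finrank ℂ (LinearMap.ker (Matrix.toLin'
        (Matrix.fromBlocks (1 : Matrix (Fin n) (Fin n) ℂ) 0 0 S))) =
      finrank ℂ (LinearMap.ker (Matrix.toLin' S)) := by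
  have hmem : ∀ x : (Fin n ⊕ Fin n) → ℂ, x ∈ LinearMap.ker (Matrix.toLin'
      (Matrix.fromBlocks (1 : Matrix (Fin n) (Fin n) ℂ) 0 0 S)) ↔
      (x ∘ Sum.inl = 0 ∧ S *ᵥ (x ∘ Sum.inr) = 0) := by
    intro x
    rw [LinearMap.mem_ker, Matrix.toLin'_apply, Matrix.fromBlocks_mulVec]
    simp only [Matrix.one_mulVec, Matrix.zero_mulVec, add_zero, zero_add]
    constructor
    · intro h
      exact ⟨funext fun i => congrFun h (Sum.inl i), funext fun i => congrFun h (Sum.inr i)⟩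
    · rintro ⟨h1, h2⟩
      funext i
      cases i with
      | inl a => exact congrFun h1 a
      | inr a => exact congrFun h2 a
  refine LinearEquiv.finrank_eq (LinearEquiv.ofLinear
    (LinearMap.codRestrict _ ((LinearMap.funLeft ℂ ℂ Sum.inr).comp (Submodule.subtype _)) ?_)
    (LinearMap.codRestrict _ ((elimZero n).comp (Submodule.subtype _)) ?_) ?_ ?_)
  · intro x
    rw [LinearMap.mem_ker, Matrix.toLin'_apply]
    exact ((hmem x.1).mp x.2).2
  · intro v
    rw [hmem]
    refine ⟨funext fun i => rfl, ?_⟩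
    have h2 := v.2
    rw [LinearMap.mem_ker, Matrix.toLin'_apply] at h2
    have : (Sum.elim (0 : Fin n → ℂ) v.1) ∘ Sum.inr = v.1 := funext fun i => rfl
    simpa [elimZero, this] using h2
  · apply LinearMap.ext; intro v
    apply Subtype.ext
    funext i; rfl
  · apply LinearMap.ext; intro x
    apply Subtype.ext
    funext i
    cases i with
    | inl a => exact (congrFun ((hmem x.1).mp x.2).1 a).symm
    | inr a => rfl

lemma key (n : ℕ) (f g : ℂ[X]) (hf0 : f.coeff 0 ≠ 0) :
    finrank ℂ (LinearMap.ker (Matrix.toLin' (Bz n f g))) =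
      finrank ℂ (LinearMap.ker (Matrix.toLin' (Rs n f g))) := by
  have hdet : IsUnit (Tp n f).det := by
    rw [det_Tp]; exact isUnit_iff_ne_zero.mpr (pow_ne_zero _ hf0)
  have iTf : Invertible (Tp n f) := Matrix.invertibleOfIsUnitDet _ hdet
  have hcomm : Tp n f * Tp n g = Tp n g * Tp n f := by rw [Tp_mul, Tp_mul, mul_comm]
  have hcancel : Tp n f * (Tp n g * ⅟(Tp n f)) = Tp n g := by
    rw [← mul_assoc, hcomm, mul_assoc, mul_invOf_self, mul_one]
  have hTfS : Tp n f * (Rv n * Hk n g - Tp n g * ⅟(Tp n f) * (Rv n * Hk n f)) =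
      -(Rv n * Bz n f g) := by
    rw [mul_sub, ← mul_assoc (Tp n f) (Tp n g * ⅟(Tp n f)) (Rv n * Hk n f), hcancel,
      ← key_identity n f g, neg_sub]
  have hSP : Rv n * Hk n g - Tp n g * ⅟(Tp n f) * (Rv n * Hk n f) =
      (-(⅟(Tp n f) * Rv n)) * Bz n f g := by
    have h := congrArg (fun X => ⅟(Tp n f) * X) hTfS
    rw [← mul_assoc (⅟(Tp n f)) (Tp n f) _, invOf_mul_self, one_mul, mul_neg,
      ← mul_assoc (⅟(Tp n f)) (Rv n) (Bz n f g), ← neg_mul] at h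
    exact h
  have i3 : Invertible (-(⅟(Tp n f) * Rv n)) :=
    ⟨-(Rv n * Tp n f),
     by rw [neg_mul_neg, mul_assoc, ← mul_assoc (Tp n f), mul_invOf_self, one_mul, Rv_mul_Rv],
     by rw [neg_mul_neg, mul_assoc, ← mul_assoc (Rv n), Rv_mul_Rv, one_mul, invOf_mul_self]⟩
  have i1 : Invertible (Matrix.fromBlocks (1 : Matrix (Fin n) (Fin n) ℂ) 0
      (Tp n g * ⅟(Tp n f)) (1 : Matrix (Fin n) (Fin n) ℂ)) :=
    ⟨Matrix.fromBlocks (1 : Matrix (Fin n) (Fin n) ℂ) 0 (-(Tp n g * ⅟(Tp n f)))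
      (1 : Matrix (Fin n) (Fin n) ℂ),
     by rw [Matrix.fromBlocks_multiply, ← Matrix.fromBlocks_one]; simp,
     by rw [Matrix.fromBlocks_multiply, ← Matrix.fromBlocks_one]; simp⟩
  have i2 : Invertible (Matrix.fromBlocks (Tp n f) (Rv n * Hk n f) 0
      (1 : Matrix (Fin n) (Fin n) ℂ)) :=
    ⟨Matrix.fromBlocks (⅟(Tp n f)) (-(⅟(Tp n f) * (Rv n * Hk n f))) 0
      (1 : Matrix (Fin n) (Fin n) ℂ),
     by
       rw [Matrix.fromBlocks_multiply, ← Matrix.fromBlocks_one]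
       simp [mul_invOf_self, ← mul_assoc, invOf_mul_self],
     by
       rw [Matrix.fromBlocks_multiply, ← Matrix.fromBlocks_one]
       simp [invOf_mul_self, ← mul_assoc]⟩
  have hfac : Rs n f g = (Matrix.fromBlocks (1 : Matrix (Fin n) (Fin n) ℂ) 0
      (Tp n g * ⅟(Tp n f)) (1 : Matrix (Fin n) (Fin n) ℂ)) *
      ((Matrix.fromBlocks (1 : Matrix (Fin n) (Fin n) ℂ) 0 0
        (Rv n * Hk n g - Tp n g * ⅟(Tp n f) * (Rv n * Hk n f))) *
       (Matrix.fromBlocks (Tp n f) (Rv n * Hk n f) 0 (1 : Matrix (Fin n) (Fin n) ℂ))) := by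
    have hb3 : Tp n g * ⅟(Tp n f) * Tp n f = Tp n g := by
      rw [mul_assoc, invOf_mul_self, mul_one]
    have hb4 : Tp n g * ⅟(Tp n f) * (Rv n * Hk n f) +
        (Rv n * Hk n g - Tp n g * ⅟(Tp n f) * (Rv n * Hk n f)) = Rv n * Hk n g := by abel
    rw [Matrix.fromBlocks_multiply]
    simp only [Matrix.one_mul, Matrix.mul_one, Matrix.zero_mul, Matrix.mul_zero, add_zero,
      zero_add]
    rw [Matrix.fromBlocks_multiply]
    simp only [Matrix.one_mul, Matrix.mul_one, Matrix.zero_mul, Matrix.mul_zero, add_zero,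
      zero_add]
    rw [hb3, hb4]
    rfl
  calc finrank ℂ (LinearMap.ker (Matrix.toLin' (Bz n f g)))
      = finrank ℂ (LinearMap.ker (Matrix.toLin' ((-(⅟(Tp n f) * Rv n)) * Bz n f g))) := by
        rw [null_left]
    _ = finrank ℂ (LinearMap.ker (Matrix.toLin'
          (Rv n * Hk n g - Tp n g * ⅟(Tp n f) * (Rv n * Hk n f)))) := by rw [← hSP]
    _ = finrank ℂ (LinearMap.ker (Matrix.toLin'
          (Matrix.fromBlocks (1 : Matrix (Fin n) (Fin n) ℂ) 0 0
            (Rv n * Hk n g - Tp n g * ⅟(Tp n f) * (Rv n * Hk n f))))) :=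
        (null_blockdiag _).symm
    _ = finrank ℂ (LinearMap.ker (Matrix.toLin'
          ((Matrix.fromBlocks (1 : Matrix (Fin n) (Fin n) ℂ) 0 0
            (Rv n * Hk n g - Tp n g * ⅟(Tp n f) * (Rv n * Hk n f))) *
           (Matrix.fromBlocks (Tp n f) (Rv n * Hk n f) 0
            (1 : Matrix (Fin n) (Fin n) ℂ))))) :=
        (@null_right _ _ _ (Matrix.fromBlocks (1 : Matrix (Fin n) (Fin n) ℂ) 0 0
            (Rv n * Hk n g - Tp n g * ⅟(Tp n f) * (Rv n * Hk n f)))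
          (Matrix.fromBlocks (Tp n f) (Rv n * Hk n f) 0
            (1 : Matrix (Fin n) (Fin n) ℂ)) i2).symm
    _ = finrank ℂ (LinearMap.ker (Matrix.toLin' (Rs n f g))) := by
        rw [hfac, null_left (Matrix.fromBlocks (1 : Matrix (Fin n) (Fin n) ℂ) 0
          (Tp n g * ⅟(Tp n f)) (1 : Matrix (Fin n) (Fin n) ℂ))]

lemma key2 (n : ℕ) (f g : ℂ[X]) (h : f.coeff 0 ≠ 0 ∨ g.coeff 0 ≠ 0) :
    finrank ℂ (LinearMap.ker (Matrix.toLin' (Bz n f g))) =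
      finrank ℂ (LinearMap.ker (Matrix.toLin' (Rs n f g))) := by
  rcases h with h | h
  · exact key n f g h
  · have hB : Bz n f g = (-(1 : Matrix (Fin n) (Fin n) ℂ)) * Bz n g f := by
      unfold Bz; rw [neg_one_mul, neg_sub]
    have hR : Rs n f g = (Matrix.fromBlocks (0 : Matrix (Fin n) (Fin n) ℂ) 1 1
        (0 : Matrix (Fin n) (Fin n) ℂ)) * Rs n g f := by
      unfold Rs; rw [Matrix.fromBlocks_multiply]; simp
    have iN : Invertible (-(1 : Matrix (Fin n) (Fin n) ℂ)) := ⟨-1, by simp, by simp⟩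
    have iS : Invertible (Matrix.fromBlocks (0 : Matrix (Fin n) (Fin n) ℂ) 1 1
        (0 : Matrix (Fin n) (Fin n) ℂ)) :=
      ⟨Matrix.fromBlocks (0 : Matrix (Fin n) (Fin n) ℂ) 1 1 (0 : Matrix (Fin n) (Fin n) ℂ),
       by rw [Matrix.fromBlocks_multiply, ← Matrix.fromBlocks_one]; simp,
       by rw [Matrix.fromBlocks_multiply, ← Matrix.fromBlocks_one]; simp⟩
    rw [hB, hR, null_left, null_left]
    exact key n g f h

/-- The Bezoutian and the resultant matrix of `f` and `g` have the same nullity. -/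
theorem bezoutian_resultant_same_nullity (f g : ℂ[X]) (hfg : f ≠ 0 ∨ g ≠ 0)
    (n : ℕ) (hn : n = max f.natDegree g.natDegree) :
    Module.finrank ℂ (LinearMap.ker (Matrix.toLin' (Bz n f g))) =
      Module.finrank ℂ (LinearMap.ker (Matrix.toLin' (Rs n f g))) := by
  by_cases h1 : f.coeff 0 ≠ 0 ∨ g.coeff 0 ≠ 0
  · exact key2 n f g h1
  push_neg at h1
  obtain ⟨hf0, hg0⟩ := h1
  have hfd : f.natDegree ≤ n := hn ▸ le_max_left _ _
  have hgd : g.natDegree ≤ n := hn ▸ le_max_right _ _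
  have hn0 : n ≠ 0 := by
    intro h0
    rcases hfg with hf | hg
    · refine hf ?_
      rw [Polynomial.eq_C_of_natDegree_le_zero (by omega : f.natDegree ≤ 0), hf0, map_zero]
    · refine hg ?_
      rw [Polynomial.eq_C_of_natDegree_le_zero (by omega : g.natDegree ≤ 0), hg0, map_zero]
  have hrev : (reflect n f).coeff 0 ≠ 0 ∨ (reflect n g).coeff 0 ≠ 0 := by
    rw [coeff_reflect, coeff_reflect, revAt_le (Nat.zero_le n), Nat.sub_zero]
    rcases max_choice f.natDegree g.natDegree with hm | hm
    · left
      have hnf : n = f.natDegree := by rw [hn, hm]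
      have hf' : f ≠ 0 := fun h => hn0 (by rw [hnf, h, natDegree_zero])
      rw [hnf]
      exact Polynomial.leadingCoeff_ne_zero.mpr hf'
    · right
      have hng : n = g.natDegree := by rw [hn, hm]
      have hg' : g ≠ 0 := fun h => hn0 (by rw [hng, h, natDegree_zero])
      rw [hng]
      exact Polynomial.leadingCoeff_ne_zero.mpr hg'
  have iRv : Invertible (Rv n) := ⟨Rv n, Rv_mul_Rv, Rv_mul_Rv⟩
  have iRvN : Invertible (-(Rv n)) :=
    ⟨-(Rv n), by rw [neg_mul_neg, Rv_mul_Rv], by rw [neg_mul_neg, Rv_mul_Rv]⟩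
  have iE : Invertible (Matrix.fromBlocks (Rv n) 0 0 (Rv n)) :=
    ⟨Matrix.fromBlocks (Rv n) 0 0 (Rv n),
     by rw [Matrix.fromBlocks_multiply, ← Matrix.fromBlocks_one]; simp [Rv_mul_Rv],
     by rw [Matrix.fromBlocks_multiply, ← Matrix.fromBlocks_one]; simp [Rv_mul_Rv]⟩
  have iW : Invertible (Matrix.fromBlocks (0 : Matrix (Fin n) (Fin n) ℂ) (Rv n) (Rv n)
      (0 : Matrix (Fin n) (Fin n) ℂ)) :=
    ⟨Matrix.fromBlocks (0 : Matrix (Fin n) (Fin n) ℂ) (Rv n) (Rv n) 0,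
     by rw [Matrix.fromBlocks_multiply, ← Matrix.fromBlocks_one]; simp [Rv_mul_Rv],
     by rw [Matrix.fromBlocks_multiply, ← Matrix.fromBlocks_one]; simp [Rv_mul_Rv]⟩
  have hBrev : Bz n (reflect n f) (reflect n g) = (-(Rv n)) * (Bz n f g * Rv n) := by
    unfold Bz
    rw [Tp_reflect hfd, Tp_reflect hgd, Hk_reflect hfd, Hk_reflect hgd]
    have r1 : (Tp n f * Rv n) * (Hk n g * Rv n) = (Tp n f * (Rv n * Hk n g)) * Rv n := by
      rw [mul_assoc (Tp n f) (Rv n) (Hk n g * Rv n), ← mul_assoc (Rv n) (Hk n g) (Rv n),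
        ← mul_assoc (Tp n f) (Rv n * Hk n g) (Rv n)]
    have r2 : (Tp n g * Rv n) * (Hk n f * Rv n) = (Tp n g * (Rv n * Hk n f)) * Rv n := by
      rw [mul_assoc (Tp n g) (Rv n) (Hk n f * Rv n), ← mul_assoc (Rv n) (Hk n f) (Rv n),
        ← mul_assoc (Tp n g) (Rv n * Hk n f) (Rv n)]
    have r3 : Tp n f * (Rv n * Hk n g) - Tp n g * (Rv n * Hk n f) = -(Rv n * Bz n f g) := by
      rw [← key_identity n f g]; abel
    rw [r1, r2, ← sub_mul, r3, neg_mul, neg_mul, mul_assoc]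
    rfl
  have hAA : ∀ A : Matrix (Fin n) (Fin n) ℂ, Rv n * (Rv n * A * Rv n) = A * Rv n := by
    intro A
    rw [mul_assoc (Rv n) A (Rv n), Rv_Rv_mul]
  have hRrev : Rs n (reflect n f) (reflect n g) =
      (Matrix.fromBlocks (Rv n) 0 0 (Rv n)) *
        (Rs n f g * (Matrix.fromBlocks (0 : Matrix (Fin n) (Fin n) ℂ) (Rv n) (Rv n)
          (0 : Matrix (Fin n) (Fin n) ℂ))) := by
    unfold Rs
    rw [Tp_reflect hfd, Tp_reflect hgd, Hk_reflect hfd, Hk_reflect hgd,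
      Matrix.fromBlocks_multiply, Matrix.fromBlocks_multiply]
    simp only [Matrix.zero_mul, Matrix.mul_zero, add_zero, zero_add, Matrix.one_mul,
      Matrix.mul_one]
    rw [hAA, hAA]
  have eB : finrank ℂ (LinearMap.ker (Matrix.toLin' (Bz n (reflect n f) (reflect n g)))) =
      finrank ℂ (LinearMap.ker (Matrix.toLin' (Bz n f g))) := by
    rw [hBrev, null_left]
    exact null_right _ _
  have eR : finrank ℂ (LinearMap.ker (Matrix.toLin' (Rs n (reflect n f) (reflect n g)))) =
      finrank ℂ (LinearMap.ker (Matrix.toLin' (Rs n f g))) := by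
    rw [hRrev, null_left]
    exact null_right _ _
  rw [← eB, ← eR]
  exact key2 n (reflect n f) (reflect n g) hrev
end

section
/- Let f, g ∈ ℂ[z] with deg f ≤ n and deg g ≤ n, and let B = H_f·T_g − H_g·T_f be the n×n Bezoutian matrix. Then for all z, w ∈ ℂ: f(z)·g(w) − f(w)·g(z) = (z − w) · Σ_{j,k=0}^{n−1} B_{jk} z^j w^k. -/
open Polynomial Matrix

section Aux
open Finset

lemma aux1 (f : ℂ[X]) (n : ℕ) (hf : f.natDegree ≤ n) (z w : ℂ) :
    (z - w) * ∑ j ∈ range n, ∑ l ∈ range n, f.coeff (j + l + 1) * z ^ j * w ^ l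
      = f.eval z - f.eval w := by
  have hz := f.eval_eq_sum_range' (Nat.lt_succ_of_le hf) z
  have hw := f.eval_eq_sum_range' (Nat.lt_succ_of_le hf) w
  rw [hz, hw, ← Finset.sum_sub_distrib]
  have key : ∀ a ∈ range (n+1), f.coeff a * z ^ a - f.coeff a * w ^ a
      = (z - w) * ∑ i ∈ range a, f.coeff a * z ^ i * w ^ (a - 1 - i) := by
    intro a _
    rw [← mul_sub, ← geom_sum₂_mul z w a]
    simp only [Finset.mul_sum, Finset.sum_mul]
    exact Finset.sum_congr rfl fun i _ => by ring
  rw [Finset.sum_congr rfl key, ← Finset.mul_sum]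
  congr 1
  rw [Finset.sum_sigma' (range (n+1)) (fun a => range a)
      (fun a i => f.coeff a * z ^ i * w ^ (a - 1 - i)),
    ← Finset.sum_product' (s := range n) (t := range n)
      (f := fun j l => f.coeff (j + l + 1) * z ^ j * w ^ l)]
  rw [← Finset.sum_filter_of_ne (s := range n ×ˢ range n)
      (p := fun q => q.1 + q.2 + 1 ≤ n)
      (f := fun q => f.coeff (q.1 + q.2 + 1) * z ^ q.1 * w ^ q.2) ?side]
  case side =>
    intro x _ hx
    by_contra h
    apply hx
    show f.coeff (x.1 + x.2 + 1) * z ^ x.1 * w ^ x.2 = 0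
    rw [Polynomial.coeff_eq_zero_of_natDegree_lt (by omega)]
    ring
  refine Finset.sum_nbij' (fun q => ⟨q.1 + q.2 + 1, q.1⟩) (fun p => (p.2, p.1 - 1 - p.2))
      ?_ ?_ ?_ ?_ ?_
  · rintro ⟨j, l⟩ hq
    simp only [Finset.mem_filter, Finset.mem_product, Finset.mem_range] at hq
    simp only [Finset.mem_sigma, Finset.mem_range]
    omega
  · rintro ⟨a, i⟩ hp
    simp only [Finset.mem_sigma, Finset.mem_range] at hp
    simp only [Finset.mem_filter, Finset.mem_product, Finset.mem_range]
    omega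
  · rintro ⟨j, l⟩ hq
    simp only [Finset.mem_filter, Finset.mem_product, Finset.mem_range] at hq
    show ((j : ℕ), j + l + 1 - 1 - j) = (j, l)
    simp only [Prod.mk.injEq, true_and]
    omega
  · rintro ⟨a, i⟩ hp
    simp only [Finset.mem_sigma, Finset.mem_range] at hp
    show (⟨i + (a - 1 - i) + 1, i⟩ : (_ : ℕ) × ℕ) = ⟨a, i⟩
    have h1 : i + (a - 1 - i) + 1 = a := by omega
    rw [h1]
  · rintro ⟨j, l⟩ hq
    simp only [Finset.mem_filter, Finset.mem_product, Finset.mem_range] at hq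
    show f.coeff (j + l + 1) * z ^ j * w ^ l
        = f.coeff (j + l + 1) * z ^ j * w ^ (j + l + 1 - 1 - j)
    have : j + l + 1 - 1 - j = l := by omega
    rw [this]

lemma auxE (f g : ℂ[X]) (n : ℕ) (hf : f.natDegree ≤ n) (hg : g.natDegree ≤ n) (z w : ℂ) :
    ∑ t ∈ ((range n ×ˢ range n) ×ˢ range (n+1)).filter (fun t => ¬ t.1.2 + t.2 < n),
        f.coeff (t.1.1 + t.1.2 + 1) * g.coeff t.2 * z ^ t.1.1 * w ^ (t.1.2 + t.2)
    = ∑ t ∈ ((range n ×ˢ range n) ×ˢ range (n+1)).filter (fun t => ¬ t.1.2 + t.2 < n),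
        g.coeff (t.1.1 + t.1.2 + 1) * f.coeff t.2 * z ^ t.1.1 * w ^ (t.1.2 + t.2) := by
  rw [← Finset.sum_filter_of_ne (s := ((range n ×ˢ range n) ×ˢ range (n+1)).filter (fun t => ¬ t.1.2 + t.2 < n))
      (p := fun t : (ℕ × ℕ) × ℕ => t.1.1 + t.1.2 + 1 ≤ n)
      (f := fun t : (ℕ × ℕ) × ℕ => f.coeff (t.1.1 + t.1.2 + 1) * g.coeff t.2 * z ^ t.1.1 * w ^ (t.1.2 + t.2)) ?s1,
    ← Finset.sum_filter_of_ne (s := ((range n ×ˢ range n) ×ˢ range (n+1)).filter (fun t => ¬ t.1.2 + t.2 < n))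
      (p := fun t : (ℕ × ℕ) × ℕ => t.1.1 + t.1.2 + 1 ≤ n)
      (f := fun t : (ℕ × ℕ) × ℕ => g.coeff (t.1.1 + t.1.2 + 1) * f.coeff t.2 * z ^ t.1.1 * w ^ (t.1.2 + t.2)) ?s2]
  case s1 =>
    intro t _ ht
    by_contra h
    apply ht
    show f.coeff (t.1.1 + t.1.2 + 1) * g.coeff t.2 * z ^ t.1.1 * w ^ (t.1.2 + t.2) = 0
    rw [Polynomial.coeff_eq_zero_of_natDegree_lt (p := f) (by omega)]
    ring
  case s2 =>
    intro t _ ht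
    by_contra h
    apply ht
    show g.coeff (t.1.1 + t.1.2 + 1) * f.coeff t.2 * z ^ t.1.1 * w ^ (t.1.2 + t.2) = 0
    rw [Polynomial.coeff_eq_zero_of_natDegree_lt (p := g) (by omega)]
    ring
  refine Finset.sum_nbij' (fun t => ((t.1.1, t.2 - t.1.1 - 1), t.1.1 + t.1.2 + 1))
      (fun t => ((t.1.1, t.2 - t.1.1 - 1), t.1.1 + t.1.2 + 1)) ?_ ?_ ?_ ?_ ?_
  · rintro ⟨⟨j, l⟩, m⟩ ht
    simp only [Finset.mem_filter, Finset.mem_product, Finset.mem_range] at ht ⊢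
    omega
  · rintro ⟨⟨j, l⟩, m⟩ ht
    simp only [Finset.mem_filter, Finset.mem_product, Finset.mem_range] at ht ⊢
    omega
  · rintro ⟨⟨j, l⟩, m⟩ ht
    simp only [Finset.mem_filter, Finset.mem_product, Finset.mem_range] at ht
    show ((j, j + l + 1 - j - 1), j + (m - j - 1) + 1) = ((j, l), m)
    simp only [Prod.mk.injEq, true_and]
    omega
  · rintro ⟨⟨j, l⟩, m⟩ ht
    simp only [Finset.mem_filter, Finset.mem_product, Finset.mem_range] at ht
    show ((j, j + l + 1 - j - 1), j + (m - j - 1) + 1) = ((j, l), m)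
    simp only [Prod.mk.injEq, true_and]
    omega
  · rintro ⟨⟨j, l⟩, m⟩ ht
    simp only [Finset.mem_filter, Finset.mem_product, Finset.mem_range] at ht
    show f.coeff (j + l + 1) * g.coeff m * z ^ j * w ^ (l + m)
        = g.coeff (j + (m - j - 1) + 1) * f.coeff (j + l + 1) * z ^ j * w ^ ((m - j - 1) + (j + l + 1))
    have e1 : j + (m - j - 1) + 1 = m := by omega
    have e2 : (m - j - 1) + (j + l + 1) = l + m := by omega
    rw [e1, e2]
    ring


lemma aux2 (F G : ℂ[X]) (n : ℕ) (z w : ℂ) :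
    ∑ j ∈ range n, ∑ k ∈ range n, (∑ l ∈ range n, F.coeff (j + l + 1) *
        (if l ≤ k then G.coeff (k - l) else 0)) * z ^ j * w ^ k
    = ∑ t ∈ ((range n ×ˢ range n) ×ˢ range (n+1)).filter (fun t => t.1.2 + t.2 < n),
        F.coeff (t.1.1 + t.1.2 + 1) * G.coeff t.2 * z ^ t.1.1 * w ^ (t.1.2 + t.2) := by
  rw [Finset.sum_filter, Finset.sum_product, Finset.sum_product]
  simp only [Finset.sum_mul]
  refine Finset.sum_congr rfl fun j hj => ?_
  rw [Finset.sum_comm]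
  refine Finset.sum_congr rfl fun l hl => ?_
  simp only [Finset.mem_range] at hj hl
  simp only [mul_ite, ite_mul, mul_zero, zero_mul]
  rw [← Finset.sum_filter, ← Finset.sum_filter]
  have h1 : (range n).filter (fun k => l ≤ k) = Finset.Ico l n := by
    ext x; simp only [Finset.mem_filter, Finset.mem_range, Finset.mem_Ico]; omega
  have h2 : (range (n+1)).filter (fun m => l + m < n) = range (n - l) := by
    ext x; simp only [Finset.mem_filter, Finset.mem_range]; omega
  rw [h1, h2, Finset.sum_Ico_eq_sum_range]
  refine Finset.sum_congr rfl fun m hm => ?_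
  have e : l + m - l = m := by omega
  rw [e]

lemma aux3 (F G : ℂ[X]) (n : ℕ) (hG : G.natDegree ≤ n) (z w : ℂ) :
    ∑ t ∈ (range n ×ˢ range n) ×ˢ range (n+1),
        F.coeff (t.1.1 + t.1.2 + 1) * G.coeff t.2 * z ^ t.1.1 * w ^ (t.1.2 + t.2)
    = (∑ j ∈ range n, ∑ l ∈ range n, F.coeff (j + l + 1) * z ^ j * w ^ l) * G.eval w := by
  rw [Finset.sum_product, Finset.sum_product, G.eval_eq_sum_range' (Nat.lt_succ_of_le hG)]
  simp only [Finset.sum_mul]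
  refine Finset.sum_congr rfl fun j hj => Finset.sum_congr rfl fun l hl => ?_
  rw [Finset.mul_sum]
  refine Finset.sum_congr rfl fun m hm => ?_
  rw [pow_add]
  ring


end Aux

open Finset in
/-- Defining property of the Bezoutian:
`f(z) g(w) - f(w) g(z) = (z - w) ∑_{j,k} B_{jk} z^j w^k`. -/
theorem bezoutian_defining_identity (f g : ℂ[X]) (n : ℕ)
    (hf : f.natDegree ≤ n) (hg : g.natDegree ≤ n) (z w : ℂ) :
    f.eval z * g.eval w - f.eval w * g.eval z =
      (z - w) * ∑ j : Fin n, ∑ k : Fin n,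
        Bz n f g j k * z ^ (j : ℕ) * w ^ (k : ℕ) := by
  have expand : (∑ j : Fin n, ∑ k : Fin n, Bz n f g j k * z ^ (j : ℕ) * w ^ (k : ℕ))
      = (∑ j ∈ range n, ∑ k ∈ range n, (∑ l ∈ range n, f.coeff (j + l + 1) *
            (if l ≤ k then g.coeff (k - l) else 0)) * z ^ j * w ^ k)
        - (∑ j ∈ range n, ∑ k ∈ range n, (∑ l ∈ range n, g.coeff (j + l + 1) *
            (if l ≤ k then f.coeff (k - l) else 0)) * z ^ j * w ^ k) := by
    simp only [← Fin.sum_univ_eq_sum_range]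
    rw [← Finset.sum_sub_distrib]
    refine Finset.sum_congr rfl fun j _ => ?_
    rw [← Finset.sum_sub_distrib]
    refine Finset.sum_congr rfl fun k _ => ?_
    simp only [Bz, Matrix.sub_apply, Matrix.mul_apply, Hk, Tp, Matrix.of_apply]
    ring
  rw [expand, aux2 f g n z w, aux2 g f n z w]
  have h1 := Finset.sum_filter_add_sum_filter_not ((range n ×ˢ range n) ×ˢ range (n+1))
      (fun t : (ℕ × ℕ) × ℕ => t.1.2 + t.2 < n)
      (fun t : (ℕ × ℕ) × ℕ => f.coeff (t.1.1 + t.1.2 + 1) * g.coeff t.2 * z ^ t.1.1 * w ^ (t.1.2 + t.2))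
  have h2 := Finset.sum_filter_add_sum_filter_not ((range n ×ˢ range n) ×ˢ range (n+1))
      (fun t : (ℕ × ℕ) × ℕ => t.1.2 + t.2 < n)
      (fun t : (ℕ × ℕ) × ℕ => g.coeff (t.1.1 + t.1.2 + 1) * f.coeff t.2 * z ^ t.1.1 * w ^ (t.1.2 + t.2))
  have hE := auxE f g n hf hg z w
  have hU1 := aux3 f g n hg z w
  have hU2 := aux3 g f n hf z w
  have hP1 := aux1 f n hf z w
  have hP2 := aux1 g n hg z w
  have key : (∑ t ∈ ((range n ×ˢ range n) ×ˢ range (n+1)).filter (fun t => t.1.2 + t.2 < n),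
          f.coeff (t.1.1 + t.1.2 + 1) * g.coeff t.2 * z ^ t.1.1 * w ^ (t.1.2 + t.2))
        - (∑ t ∈ ((range n ×ˢ range n) ×ˢ range (n+1)).filter (fun t => t.1.2 + t.2 < n),
          g.coeff (t.1.1 + t.1.2 + 1) * f.coeff t.2 * z ^ t.1.1 * w ^ (t.1.2 + t.2))
      = (∑ j ∈ range n, ∑ l ∈ range n, f.coeff (j + l + 1) * z ^ j * w ^ l) * g.eval w
        - (∑ j ∈ range n, ∑ l ∈ range n, g.coeff (j + l + 1) * z ^ j * w ^ l) * f.eval w := by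
    rw [← hU1, ← hU2, ← h1, ← h2, hE]
    ring
  rw [key]
  calc f.eval z * g.eval w - f.eval w * g.eval z
      = (f.eval z - f.eval w) * g.eval w - (g.eval z - g.eval w) * f.eval w := by ring
    _ = ((z - w) * ∑ j ∈ range n, ∑ l ∈ range n, f.coeff (j + l + 1) * z ^ j * w ^ l) * g.eval w
        - ((z - w) * ∑ j ∈ range n, ∑ l ∈ range n, g.coeff (j + l + 1) * z ^ j * w ^ l) * f.eval w := by
        rw [hP1, hP2]
    _ = _ := by ring
end

section
/- Let f, g ∈ ℂ[z] with deg f ≤ n and deg g ≤ n. Then the n×n Bezoutian matrix B = H_f·T_g − H_g·T_f is symmetric: Bᵀ = B. -/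
open Polynomial Matrix

private lemma bez_key (f g : ℂ[X]) (j k : ℕ) :
    ∑ i ∈ Finset.range (k+1),
      (f.coeff (j+i+1) * g.coeff (k-i) - g.coeff (j+i+1) * f.coeff (k-i))
    = ∑ i ∈ Finset.range (j+1),
      (f.coeff (k+i+1) * g.coeff (j-i) - g.coeff (k+i+1) * f.coeff (j-i)) := by
  set s := j + k + 1 with hs
  set t : ℕ → ℂ := fun b => f.coeff b * g.coeff (s-b) - g.coeff b * f.coeff (s-b) with ht
  -- Step A (general form): a sum of this shape equals -∑_{range (b+1)} t
  have hA : ∀ a b : ℕ, s = a + b + 1 →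
      (∑ i ∈ Finset.range (b+1),
        (f.coeff (a+i+1) * g.coeff (b-i) - g.coeff (a+i+1) * f.coeff (b-i)))
      = -∑ c ∈ Finset.range (b+1), t c := by
    intro a b hab
    have h1 : ∀ i ∈ Finset.range (b+1),
        (f.coeff (a+i+1) * g.coeff (b-i) - g.coeff (a+i+1) * f.coeff (b-i))
        = -(t (b - i)) := by
      intro i hi
      simp only [Finset.mem_range] at hi
      have h2 : s - (b - i) = a + i + 1 := by omega
      simp only [ht, h2]
      ring
    rw [Finset.sum_congr rfl h1, Finset.sum_neg_distrib, neg_inj]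
    have := Finset.sum_range_reflect t (b+1)
    simpa using this
  -- Step T : total sum vanishes
  have hT : ∑ c ∈ Finset.range (s+1), t c = 0 := by
    have hrefl := Finset.sum_range_reflect t (s+1)
    simp only [Nat.add_sub_cancel] at hrefl
    have h1 : ∀ c ∈ Finset.range (s+1), t (s - c) = -(t c) := by
      intro c hc
      simp only [Finset.mem_range] at hc
      have h2 : s - (s - c) = c := by omega
      simp only [ht, h2]
      ring
    rw [Finset.sum_congr rfl h1, Finset.sum_neg_distrib] at hrefl
    have h2 : (2:ℂ) * ∑ c ∈ Finset.range (s+1), t c = 0 := by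
      linear_combination -hrefl
    simpa using (mul_eq_zero.mp h2).resolve_left (by norm_num)
  -- Step B : the two partial sums of t agree
  have hsplit : ∑ c ∈ Finset.range (s+1), t c
      = ∑ c ∈ Finset.range (j+1), t c + ∑ i ∈ Finset.range (k+1), t (j+1+i) := by
    have h : s + 1 = (j+1) + (k+1) := by omega
    rw [h, Finset.sum_range_add]
  have hmid : ∑ i ∈ Finset.range (k+1), t (j+1+i)
      = -∑ c ∈ Finset.range (k+1), t c := by
    have h1 : ∀ i ∈ Finset.range (k+1), t (j+1+i) = -(t (k - i)) := by
      intro i hi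
      simp only [Finset.mem_range] at hi
      have h2 : s - (j+1+i) = k - i := by omega
      have h3 : s - (k - i) = j+1+i := by omega
      simp only [ht, h2, h3]
      ring
    rw [Finset.sum_congr rfl h1, Finset.sum_neg_distrib, neg_inj]
    have := Finset.sum_range_reflect t (k+1)
    simpa using this
  have hAB : ∑ c ∈ Finset.range (j+1), t c = ∑ c ∈ Finset.range (k+1), t c := by
    have h := hT
    rw [hsplit, hmid] at h
    linear_combination h
  rw [hA j k rfl, hA k j (by omega), hAB]

private lemma Bz_entry (n : ℕ) (f g : ℂ[X]) (j k : Fin n) :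
    Bz n f g j k = ∑ i ∈ Finset.range ((k:ℕ)+1),
      (f.coeff ((j:ℕ)+i+1) * g.coeff ((k:ℕ)-i)
        - g.coeff ((j:ℕ)+i+1) * f.coeff ((k:ℕ)-i)) := by
  simp only [Bz, Matrix.sub_apply, Matrix.mul_apply, Hk, Tp, Matrix.of_apply]
  rw [← Finset.sum_sub_distrib]
  have h1 : (∑ i : Fin n,
      (f.coeff ((j:ℕ)+(i:ℕ)+1) * (if (i:ℕ) ≤ (k:ℕ) then g.coeff ((k:ℕ)-(i:ℕ)) else 0)
      - g.coeff ((j:ℕ)+(i:ℕ)+1) * (if (i:ℕ) ≤ (k:ℕ) then f.coeff ((k:ℕ)-(i:ℕ)) else 0)))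
      = ∑ i ∈ Finset.range n,
      (f.coeff ((j:ℕ)+i+1) * (if i ≤ (k:ℕ) then g.coeff ((k:ℕ)-i) else 0)
      - g.coeff ((j:ℕ)+i+1) * (if i ≤ (k:ℕ) then f.coeff ((k:ℕ)-i) else 0)) :=
    Fin.sum_univ_eq_sum_range (fun i =>
      (f.coeff ((j:ℕ)+i+1) * (if i ≤ (k:ℕ) then g.coeff ((k:ℕ)-i) else 0)
      - g.coeff ((j:ℕ)+i+1) * (if i ≤ (k:ℕ) then f.coeff ((k:ℕ)-i) else 0))) n
  rw [h1]
  rw [← Finset.sum_subset (Finset.range_subset_range.mpr k.isLt)]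
  · apply Finset.sum_congr rfl
    intro i hi
    simp only [Finset.mem_range] at hi
    have h : i ≤ (k:ℕ) := by omega
    simp [h]
  · intro i _ hi
    simp only [Finset.mem_range] at hi
    have h : ¬ i ≤ (k:ℕ) := by omega
    simp [h]

/-- The Bezoutian matrix is symmetric. -/
theorem bezoutian_symmetric (f g : ℂ[X]) (n : ℕ)
    (hf : f.natDegree ≤ n) (hg : g.natDegree ≤ n) :
    (Bz n f g)ᵀ = Bz n f g := by
  ext j k
  rw [Matrix.transpose_apply, Bz_entry, Bz_entry]
  exact (bez_key f g (j:ℕ) (k:ℕ)).symm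
end

section
/- Let f, g ∈ ℂ[z] with deg f ≤ n and deg g ≤ n, let B = H_f·T_g − H_g·T_f be the n×n Bezoutian matrix and R = [[T_f, Z·H_f],[T_g, Z·H_g]] the 2n×2n resultant matrix. Then [[I, 0],[T_f, Z·H_f]] · R = [[0, I],[Z, T_f + Z·H_g]] · [[B, 0],[0, I]] · [[I, 0],[T_f, Z·H_f]], where all 2×2 block matrices have n×n blocks and I denotes the n×n identity matrix. -/
open Polynomial Matrix

lemma keycoeff (f g : ℂ[X]) (n j k : ℕ) (hf : f.natDegree ≤ n) (hg : g.natDegree ≤ n) :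
    ∑ b ∈ Finset.range n, f.coeff (j + b + 1) * g.coeff (n + k - b) =
      (f * g).coeff (j + k + n + 1) := by
  rw [coeff_mul, Finset.Nat.sum_antidiagonal_eq_sum_range_succ_mk]
  have hsub : Finset.Ico (j + 1) (j + 1 + n) ⊆ Finset.range (j + k + n + 1).succ := by
    intro s hs; simp only [Finset.mem_Ico, Finset.mem_range] at *; omega
  rw [← Finset.sum_subset hsub (by
    intro s hs hns
    simp only [Finset.mem_Ico, Finset.mem_range] at hs hns
    rcases le_or_gt s j with h | h
    · have : g.coeff (j + k + n + 1 - s) = 0 :=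
        coeff_eq_zero_of_natDegree_lt (by omega)
      simp [this]
    · have : f.coeff s = 0 := coeff_eq_zero_of_natDegree_lt (by omega)
      simp [this])]
  rw [Finset.sum_Ico_eq_sum_range]
  refine Finset.sum_congr (by congr 1; omega) fun b hb => ?_
  simp only [Finset.mem_range] at hb
  congr 2 <;> omega

lemma RvHk_apply (n : ℕ) (g : ℂ[X]) (b k : Fin n) :
    (Rv n * Hk n g) b k = g.coeff (n + (k : ℕ) - (b : ℕ)) := by
  have hb := b.2
  rw [Matrix.mul_apply]
  rw [Finset.sum_eq_single (⟨n - 1 - (b : ℕ), by omega⟩ : Fin n)]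
  · simp only [Rv, Hk, Matrix.of_apply]
    rw [if_pos (by omega)]
    rw [one_mul]
    congr 1
    omega
  · intro a _ ha
    simp only [Rv, Hk, Matrix.of_apply]
    rw [if_neg, zero_mul]
    intro h
    apply ha
    apply Fin.ext
    simp only []
    omega
  · intro h; exact absurd (Finset.mem_univ _) h

lemma HZH (n : ℕ) (f g : ℂ[X]) (hf : f.natDegree ≤ n) (hg : g.natDegree ≤ n) :
    Hk n f * (Rv n * Hk n g) = Hk n g * (Rv n * Hk n f) := by
  ext j k
  rw [Matrix.mul_apply, Matrix.mul_apply]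
  calc ∑ b : Fin n, Hk n f j b * (Rv n * Hk n g) b k
      = ∑ b ∈ Finset.range n, f.coeff ((j:ℕ) + b + 1) * g.coeff (n + (k:ℕ) - b) := by
        rw [← Fin.sum_univ_eq_sum_range]
        exact Finset.sum_congr rfl fun b _ => by rw [RvHk_apply]; rfl
    _ = (f * g).coeff ((j:ℕ) + (k:ℕ) + n + 1) := keycoeff f g n j k hf hg
    _ = (g * f).coeff ((j:ℕ) + (k:ℕ) + n + 1) := by rw [mul_comm]
    _ = ∑ b ∈ Finset.range n, g.coeff ((j:ℕ) + b + 1) * f.coeff (n + (k:ℕ) - b) :=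
        (keycoeff g f n j k hg hf).symm
    _ = ∑ b : Fin n, Hk n g j b * (Rv n * Hk n f) b k := by
        rw [← Fin.sum_univ_eq_sum_range]
        exact Finset.sum_congr rfl fun b _ => by rw [RvHk_apply]; rfl

/-- The block factorization `[[I, 0], [T_f, Z H_f]] R
= [[0, I], [Z, T_f + Z H_g]] [[B, 0], [0, I]] [[I, 0], [T_f, Z H_f]]`. -/
theorem resultant_block_factorization (f g : ℂ[X]) (n : ℕ)
    (hf : f.natDegree ≤ n) (hg : g.natDegree ≤ n) :
    Matrix.fromBlocks 1 0 (Tp n f) (Rv n * Hk n f) * Rs n f g =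
      Matrix.fromBlocks 0 1 (Rv n) (Tp n f + Rv n * Hk n g) *
        Matrix.fromBlocks (Bz n f g) 0 0 1 *
        Matrix.fromBlocks 1 0 (Tp n f) (Rv n * Hk n f) := by
  rw [Rs, Matrix.fromBlocks_multiply, Matrix.fromBlocks_multiply,
    Matrix.fromBlocks_multiply, Matrix.fromBlocks_inj]
  refine ⟨by noncomm_ring, by noncomm_ring, ?_, ?_⟩
  · rw [Bz]
    noncomm_ring
  · have h := HZH n f g hf hg
    noncomm_ring
    rw [h]
end

section
/- Let f, g ∈ ℂ[z] be polynomials, not both zero, let n = max(deg f, deg g), let h = gcd(f, g) with k = deg h, and write f = f̂·h and g = ĝ·h. Then for u, v ∈ ℂ[z] with deg u < n and deg v < n, one has f·u + g·v = 0 if and only if there exists a polynomial q ∈ ℂ[z] with deg q < k such that u = −ĝ·q and v = f̂·q. -/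
open Polynomial

/-- Characterization of the kernel of the multiplication map `(u, v) ↦ f u + g v`:
with `h = gcd(f, g)`, `k = deg h`, `f = f̂ h`, `g = ĝ h`, a pair `(u, v)` of
polynomials of degree `< n = max(deg f, deg g)` satisfies `f u + g v = 0` iff
`u = -ĝ q` and `v = f̂ q` for some polynomial `q` of degree `< k`. -/
theorem kernel_mult_map_characterization (f g : ℂ[X]) (hfg : f ≠ 0 ∨ g ≠ 0)
    (n : ℕ) (hn : n = max f.natDegree g.natDegree)
    (h : ℂ[X]) (hh : h = EuclideanDomain.gcd f g)
    (k : ℕ) (hk : k = h.natDegree)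
    (fhat ghat : ℂ[X]) (hf : f = fhat * h) (hg : g = ghat * h)
    (u v : ℂ[X]) (hu : u.degree < n) (hv : v.degree < n) :
    f * u + g * v = 0 ↔
      ∃ q : ℂ[X], q.degree < k ∧ u = -(ghat * q) ∧ v = fhat * q := by
  have hh0 : h ≠ 0 := by
    rw [hh, Ne, EuclideanDomain.gcd_eq_zero_iff]
    rintro ⟨rfl, rfl⟩
    rcases hfg with h1 | h1 <;> exact h1 rfl
  -- coprimality of fhat and ghat
  have hbez : f * EuclideanDomain.gcdA f g + g * EuclideanDomain.gcdB f g = h := by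
    rw [hh]; exact (EuclideanDomain.gcd_eq_gcd_ab f g).symm
  obtain ⟨a, b, hab⟩ : ∃ a b, f * a + g * b = h := ⟨_, _, hbez⟩
  have hco : IsCoprime fhat ghat := by
    refine ⟨a, b, ?_⟩
    rw [hf, hg] at hab
    have : (a * fhat + b * ghat) * h = 1 * h := by linear_combination hab
    exact mul_right_cancel₀ hh0 this
  constructor
  · intro heq
    have heq' : fhat * u + ghat * v = 0 := by
      have : (fhat * u + ghat * v) * h = 0 * h := by
        rw [zero_mul, ← heq, hf, hg]; ring
      exact mul_right_cancel₀ hh0 this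
    by_cases hf0 : fhat = 0
    · -- f = 0, ghat is a unit, h = g
      have hfz : f = 0 := by rw [hf, hf0, zero_mul]
      have hgu : IsUnit ghat := isCoprime_zero_left.mp (hf0 ▸ hco)
      obtain ⟨c, hc⟩ := Polynomial.isUnit_iff.mp hgu
      have hc0 : c ≠ 0 := hc.1.ne_zero
      have hv0 : v = 0 := by
        have : ghat * v = 0 := by rw [← heq', hf0]; ring
        rcases mul_eq_zero.mp this with h' | h'
        · exact absurd h' hgu.ne_zero
        · exact h'
      have hnk : (n : WithBot ℕ) = (k : WithBot ℕ) := by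
        have hhg : h = g := by rw [hh, hfz, EuclideanDomain.gcd_zero_left]
        rw [hn, hk, hhg, hfz, natDegree_zero]
        simp
      refine ⟨-(C c⁻¹ * u), ?_, ?_, ?_⟩
      · rw [← hnk]
        calc (-(C c⁻¹ * u)).degree ≤ (C c⁻¹ * u).degree := by rw [degree_neg]
          _ ≤ (C c⁻¹).degree + u.degree := degree_mul_le _ _
          _ ≤ 0 + u.degree := by gcongr; exact degree_C_le
          _ = u.degree := by rw [zero_add]
          _ < n := hu
      · rw [← hc.2, mul_neg, ← mul_assoc, ← C_mul, mul_inv_cancel₀ hc0, C_1, one_mul, neg_neg]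
      · rw [hf0, zero_mul, hv0]
    · by_cases hg0 : ghat = 0
      · -- g = 0, fhat is a unit, h = f
        have hgz : g = 0 := by rw [hg, hg0, zero_mul]
        have hfu : IsUnit fhat := isCoprime_zero_right.mp (hg0 ▸ hco)
        obtain ⟨c, hc⟩ := Polynomial.isUnit_iff.mp hfu
        have hc0 : c ≠ 0 := hc.1.ne_zero
        have hu0 : u = 0 := by
          have : fhat * u = 0 := by rw [← heq'] ; rw [hg0]; ring
          rcases mul_eq_zero.mp this with h' | h'
          · exact absurd h' hfu.ne_zero
          · exact h'
        have hnk : (n : WithBot ℕ) = (k : WithBot ℕ) := by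
          have hhf : h = f := by rw [hh, hgz, EuclideanDomain.gcd_zero_right]
          rw [hn, hk, hhf, hgz, natDegree_zero]
          simp
        refine ⟨C c⁻¹ * v, ?_, ?_, ?_⟩
        · rw [← hnk]
          calc (C c⁻¹ * v).degree ≤ (C c⁻¹).degree + v.degree := degree_mul_le _ _
            _ ≤ 0 + v.degree := by gcongr; exact degree_C_le
            _ = v.degree := by rw [zero_add]
            _ < n := hv
        · rw [hg0, zero_mul, neg_zero, hu0]
        · rw [← hc.2, ← mul_assoc, ← C_mul, mul_inv_cancel₀ hc0, C_1, one_mul]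
      · -- generic case
        have hdvd : fhat ∣ v := by
          apply hco.dvd_of_dvd_mul_left
          exact ⟨-u, by linear_combination heq'⟩
        obtain ⟨q, hq⟩ := hdvd
        have hueq : u = -(ghat * q) := by
          have : fhat * u = fhat * (-(ghat * q)) := by
            linear_combination heq' - ghat * hq
          exact mul_left_cancel₀ hf0 this
        refine ⟨q, ?_, hueq, hq⟩
        by_cases hq0 : q = 0
        · rw [hq0, degree_zero]; exact bot_lt_iff_ne_bot.mpr (by simp)
        · -- natDegree bound
          have hfz : f ≠ 0 := by rw [hf]; exact mul_ne_zero hf0 hh0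
          have hgz : g ≠ 0 := by rw [hg]; exact mul_ne_zero hg0 hh0
          have hndq : q.natDegree < k := by
            rcases le_total f.natDegree g.natDegree with hle | hle
            · -- n = natDegree g, use u
              have hu0 : u ≠ 0 := by
                rw [hueq]; simpa using mul_ne_zero hg0 hq0
              have h1 : u.natDegree < n := (natDegree_lt_iff_degree_lt hu0).mpr hu
              have h2 : u.natDegree = ghat.natDegree + q.natDegree := by
                rw [hueq, natDegree_neg, natDegree_mul hg0 hq0]
              have h3 : n = ghat.natDegree + k := by
                rw [hn, max_eq_right hle, hg, natDegree_mul hg0 hh0, hk]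
              omega
            · have hv0 : v ≠ 0 := by rw [hq]; exact mul_ne_zero hf0 hq0
              have h1 : v.natDegree < n := (natDegree_lt_iff_degree_lt hv0).mpr hv
              have h2 : v.natDegree = fhat.natDegree + q.natDegree := by
                rw [hq, natDegree_mul hf0 hq0]
              have h3 : n = fhat.natDegree + k := by
                rw [hn, max_eq_left hle, hf, natDegree_mul hf0 hh0, hk]
              omega
          rw [degree_eq_natDegree hq0]
          exact_mod_cast hndq
  · rintro ⟨q, _, rfl, rfl⟩
    rw [hf, hg]; ring
end
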